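/- Power composition law for repetitions: for any TPG G, path expression p, and naturals n₁ ≤ m₁, n₂ ≤ m₂, ⟦p[n₁,m₁]/p[n₂,m₂]⟧_G = ⟦p[n₁+n₂, m₁+m₂]⟧_G. -/

import Mathlib

structure TPG (V E : Type) where
  Om : Set ℕ
  src : E → V
  tgt : E → V
  lab : V ⊕ E → String
  xi : V ⊕ E → ℕ → Bool
  sig : V ⊕ E → String → ℕ → Option String

abbrev TObj (V E : Type) := (V ⊕ E) × ℕ
abbrev TRel (V E : Type) := Set (TObj V E × TObj V E)

variable {V E : Type}

/-- PTO(G): pairs of temporal objects whose time points belong to Ω. -/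
def TPG.PTO (G : TPG V E) : TRel V E := {x | x.1.2 ∈ G.Om ∧ x.2.2 ∈ G.Om}

/-- Relational composition (concatenation of path semantics). -/
def compR (R S : TRel V E) : TRel V E := {x | ∃ m, (x.1, m) ∈ R ∧ (m, x.2) ∈ S}

/-- Identity relation on temporal objects of G. -/
def TPG.IdR (G : TPG V E) : TRel V E := {x | x.1 = x.2 ∧ x.1.2 ∈ G.Om}

/-- k-fold composition, with the identity on temporal objects as 0th power. -/
def powR (G : TPG V E) (R : TRel V E) : ℕ → TRel V E
  | 0 => G.IdR
  | k + 1 => compR (powR G R k) R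

/-- ⟦p[n,m]⟧ = union of powers between n and m. -/
def repR (G : TPG V E) (R : TRel V E) (n m : ℕ) : TRel V E := ⋃ k ∈ Set.Icc n m, powR G R k

/-- ⟦p[n,_]⟧ = union of powers at least n. -/
def repInfR (G : TPG V E) (R : TRel V E) (n : ℕ) : TRel V E := ⋃ k ∈ Set.Ici n, powR G R k

/-- Forward structural axis F. -/
def TPG.axF (G : TPG V E) : TRel V E :=
  {x | x ∈ G.PTO ∧ x.1.2 = x.2.2 ∧
    ((∃ v e, x.1.1 = Sum.inl v ∧ x.2.1 = Sum.inr e ∧ G.src e = v) ∨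
     (∃ e v, x.1.1 = Sum.inr e ∧ x.2.1 = Sum.inl v ∧ G.tgt e = v))}

/-- Backward structural axis B. -/
def TPG.axB (G : TPG V E) : TRel V E :=
  {x | x ∈ G.PTO ∧ x.1.2 = x.2.2 ∧
    ((∃ v e, x.1.1 = Sum.inl v ∧ x.2.1 = Sum.inr e ∧ G.tgt e = v) ∨
     (∃ e v, x.1.1 = Sum.inr e ∧ x.2.1 = Sum.inl v ∧ G.src e = v))}

/-- Temporal axis N (next time point). -/
def TPG.axN (G : TPG V E) : TRel V E :=
  {x | x ∈ G.PTO ∧ x.1.1 = x.2.1 ∧ x.2.2 = x.1.2 + 1}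

/-- Temporal axis P (previous time point). -/
def TPG.axP (G : TPG V E) : TRel V E :=
  {x | x ∈ G.PTO ∧ x.1.1 = x.2.1 ∧ x.1.2 = x.2.2 + 1}

mutual
/-- Path expressions of NavL[PC,NOI]. -/
inductive PathE (V E : Type) where
  | axF | axB | axN | axP
  | test (τ : TestE V E)
  | comp (p q : PathE V E)
  | disj (p q : PathE V E)
  | rep (p : PathE V E) (n m : ℕ)
  | repInf (p : PathE V E) (n : ℕ)

/-- Test expressions of NavL[PC,NOI]. -/
inductive TestE (V E : Type) where
  | isNode | isEdge
  | lab (l : String)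
  | prop (p v : String)
  | lt (k : ℕ)
  | ex
  | q (p : PathE V E)
  | or (a b : TestE V E)
  | and (a b : TestE V E)
  | not (a : TestE V E)
end

mutual
/-- Semantics ⟦path⟧_G as a relation on temporal objects. -/
def sem (G : TPG V E) : PathE V E → TRel V E
  | .axF => G.axF
  | .axB => G.axB
  | .axN => G.axN
  | .axP => G.axP
  | .test τ => {x | x.1 = x.2 ∧ x.1.2 ∈ G.Om ∧ sat G τ x.1}
  | .comp p q => compR (sem G p) (sem G q)
  | .disj p q => sem G p ∪ sem G q
  | .rep p n m => repR G (sem G p) n m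
  | .repInf p n => repInfR G (sem G p) n

/-- Satisfaction (o,t) ⊨ test. -/
def sat (G : TPG V E) : TestE V E → TObj V E → Prop
  | .isNode, x => ∃ v, x.1 = Sum.inl v
  | .isEdge, x => ∃ e, x.1 = Sum.inr e
  | .lab l, x => G.lab x.1 = l
  | .prop p v, x => G.sig x.1 p x.2 = some v
  | .lt k, x => x.2 < k
  | .ex, x => G.xi x.1 x.2 = true
  | .q p, x => ∃ y, (x, y) ∈ sem G p
  | .or a b, x => sat G a x ∨ sat G b x
  | .and a b, x => sat G a x ∧ sat G b x
  | .not a, x => ¬ sat G a x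
end

/-! Every semantics ⟦p⟧_G lies in PTO(G), so the identity on temporal objects of `G` is a right
unit for it; hence relational powers add, `⟦pᵃ⟧ / ⟦pᵇ⟧ = ⟦p^{a+b}⟧`, and composition distributes
over the unions defining repetitions. What remains is the fact that every `k ∈ [n₁+n₂, m₁+m₂]`
splits as `k₁ + k₂` with `k₁ ∈ [n₁, m₁]` and `k₂ ∈ [n₂, m₂]`. -/

section Relations

variable {G : TPG V E} {R S : TRel V E}

lemma compR_assoc (R S T : TRel V E) : compR (compR R S) T = compR R (compR S T) := by
  ext x
  constructor
  · rintro ⟨b, ⟨a, hRa, hSa⟩, hT⟩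
    exact ⟨a, hRa, b, hSa, hT⟩
  · rintro ⟨a, hRa, b, hSa, hT⟩
    exact ⟨b, ⟨a, hRa, hSa⟩, hT⟩

lemma compR_subset_PTO (hR : R ⊆ G.PTO) (hS : S ⊆ G.PTO) : compR R S ⊆ G.PTO := by
  rintro x ⟨a, hRa, hSa⟩
  exact ⟨(hR hRa).1, (hS hSa).2⟩

lemma TPG.IdR_subset_PTO (G : TPG V E) : G.IdR ⊆ G.PTO := by
  rintro x ⟨hx, hΩ⟩
  exact ⟨hΩ, hx ▸ hΩ⟩

lemma powR_subset_PTO (hR : R ⊆ G.PTO) : ∀ k, powR G R k ⊆ G.PTO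
  | 0 => G.IdR_subset_PTO
  | k + 1 => compR_subset_PTO (powR_subset_PTO hR k) hR

lemma compR_IdR (hR : R ⊆ G.PTO) : compR R G.IdR = R := by
  ext x
  constructor
  · rintro ⟨a, hRa, ha, -⟩
    obtain rfl : a = x.2 := ha
    exact hRa
  · intro hx
    exact ⟨x.2, hx, rfl, (hR hx).2⟩

lemma powR_add (hR : R ⊆ G.PTO) (a : ℕ) :
    ∀ b, compR (powR G R a) (powR G R b) = powR G R (a + b)
  | 0 => compR_IdR (powR_subset_PTO hR a)
  | b + 1 => by
    rw [powR, ← compR_assoc, powR_add hR a b]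
    rfl

lemma Nat.exists_add_eq_of_mem_Icc_add {n₁ m₁ n₂ m₂ k : ℕ} (h₁ : n₁ ≤ m₁) (h₂ : n₂ ≤ m₂)
    (hk : k ∈ Set.Icc (n₁ + n₂) (m₁ + m₂)) :
    ∃ k₁ ∈ Set.Icc n₁ m₁, ∃ k₂ ∈ Set.Icc n₂ m₂, k₁ + k₂ = k := by
  obtain ⟨hnk, hkm⟩ := hk
  -- make `k₁` as large as `m₁` and `k₂ ≥ n₂` allow
  exact ⟨min m₁ (k - n₂), ⟨by omega, by omega⟩, k - min m₁ (k - n₂), ⟨by omega, by omega⟩,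
    by omega⟩

lemma compR_repR (hR : R ⊆ G.PTO) {n₁ m₁ n₂ m₂ : ℕ} (h₁ : n₁ ≤ m₁) (h₂ : n₂ ≤ m₂) :
    compR (repR G R n₁ m₁) (repR G R n₂ m₂) = repR G R (n₁ + n₂) (m₁ + m₂) := by
  ext x
  simp only [repR, compR, Set.mem_iUnion, exists_prop]
  constructor
  · rintro ⟨a, ⟨k₁, ⟨hn₁, hm₁⟩, hk₁⟩, ⟨k₂, ⟨hn₂, hm₂⟩, hk₂⟩⟩
    refine ⟨k₁ + k₂, ⟨by omega, by omega⟩, ?_⟩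
    rw [← powR_add hR]
    exact ⟨a, hk₁, hk₂⟩
  · rintro ⟨k, hk, hx⟩
    obtain ⟨k₁, hk₁, k₂, hk₂, rfl⟩ := Nat.exists_add_eq_of_mem_Icc_add h₁ h₂ hk
    rw [← powR_add hR] at hx
    obtain ⟨a, ha₁, ha₂⟩ := hx
    exact ⟨a, ⟨k₁, hk₁, ha₁⟩, ⟨k₂, hk₂, ha₂⟩⟩

end Relations

theorem sem_subset_PTO (G : TPG V E) : ∀ p : PathE V E, sem G p ⊆ G.PTO
  | .axF | .axB | .axN | .axP => fun _ hx => hx.1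
  | .test _ => fun _ hx => G.IdR_subset_PTO ⟨hx.1, hx.2.1⟩
  | .comp p q => compR_subset_PTO (sem_subset_PTO G p) (sem_subset_PTO G q)
  | .disj p q => Set.union_subset (sem_subset_PTO G p) (sem_subset_PTO G q)
  | .rep p _ _ => Set.iUnion₂_subset fun k _ => powR_subset_PTO (sem_subset_PTO G p) k
  | .repInf p _ => Set.iUnion₂_subset fun k _ => powR_subset_PTO (sem_subset_PTO G p) k

/-- power composition law for repetitions. -/
theorem rep_comp_add (V E : Type) (G : TPG V E) (p : PathE V E) (n₁ m₁ n₂ m₂ : ℕ)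
    (h₁ : n₁ ≤ m₁) (h₂ : n₂ ≤ m₂) :
    sem G (.comp (.rep p n₁ m₁) (.rep p n₂ m₂)) = sem G (.rep p (n₁ + n₂) (m₁ + m₂)) :=
  compR_repR (sem_subset_PTO G p) h₁ h₂
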